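/- arXiv:1810.09939 — 5 statements merged into one kernel-verified Lean document; each statement's English description precedes it below -/
import Mathlib

section
/- Euler transformation: for |z| < 1, ₂F₁(a,b;c;z) = (1−z)^{c−a−b} ₂F₁(c−a, c−b; c; z). -/
/-!
Both `₂F₁(c-a, c-b; c; z)` and `(1-z)^{c-a-b} = ∑ (a+b-c)ₙ zⁿ/n!` converge absolutely for
`|z| < 1`, so their product is the Cauchy product, and the theorem reduces to the coefficient
identity `∑ₖ (c-a)ₖ(c-b)ₖ/((c)ₖ k!) · (a+b-c)ₙ₋ₖ/(n-k)! = (a)ₙ(b)ₙ/((c)ₙ n!)`, a form of the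
Pfaff–Saalschütz summation. Both sides satisfy the recurrence
`(n+1)(c+n) tₙ₊₁ = (a+n)(b+n) tₙ`: for the left side, with `uₖ` and `vⱼ` the two factors of
its summand, this follows by telescoping with the Wilf–Zeilberger certificate
`k(c+k-1) uₖ vₙ₊₁₋ₖ`.
-/

open Finset
open scoped Nat

/-- Pochhammer symbol `(q)_n`. -/
noncomputable def poch (q : ℂ) : ℕ → ℂ
  | 0 => 1
  | n + 1 => poch q n * (q + n)

/-- The Gauss hypergeometric series `₂F₁(a,b;c;z)`. -/
noncomputable def hyp2F1 (a b c z : ℂ) : ℂ :=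
  ∑' n : ℕ, poch a n * poch b n / (poch c n * n.factorial) * z ^ n

lemma poch_eq_eval_ascPochhammer (q : ℂ) (n : ℕ) : poch q n = (ascPochhammer ℂ n).eval q := by
  induction n with
  | zero => simp [poch]
  | succ n ih => rw [poch, ih, ascPochhammer_succ_eval]

lemma hyp2F1_eq_tsum (a b c z : ℂ) :
    hyp2F1 a b c z = ∑' n, ordinaryHypergeometricCoefficient a b c n * z ^ n := by
  simp only [hyp2F1, poch_eq_eval_ascPochhammer, div_eq_mul_inv, mul_inv]
  congr! 2
  ring

section Coefficients

variable {𝕂 : Type*} [Field 𝕂]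

noncomputable def negBinomialCoeff (s : 𝕂) (n : ℕ) : 𝕂 :=
  (n ! : 𝕂)⁻¹ * (ascPochhammer 𝕂 n).eval s

noncomputable def pfaffSaalschutzSum (a b c : 𝕂) (n : ℕ) : 𝕂 :=
  ∑ k ∈ range (n + 1),
    ordinaryHypergeometricCoefficient (c - a) (c - b) c k * negBinomialCoeff (a + b - c) (n - k)

variable [CharZero 𝕂]

lemma negBinomialCoeff_eq_choose (s : 𝕂) (n : ℕ) :
    negBinomialCoeff s n = Ring.choose (s + n - 1) n := by
  rw [Ring.choose_eq_smul, Polynomial.descPochhammer_smeval_eq_ascPochhammer,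
    Polynomial.ascPochhammer_smeval_eq_eval, smul_eq_mul, negBinomialCoeff]
  ring_nf

lemma succ_mul_negBinomialCoeff_succ (s : 𝕂) (n : ℕ) :
    (n + 1) * negBinomialCoeff s (n + 1) = (s + n) * negBinomialCoeff s n := by
  simp only [negBinomialCoeff, ascPochhammer_succ_eval, Nat.factorial_succ, Nat.cast_mul,
    Nat.cast_succ]
  field_simp

lemma succ_mul_ordinaryHypergeometricCoefficient_succ (a b c : 𝕂) {n : ℕ} (hc : c + n ≠ 0) :
    (n + 1) * (c + n) * ordinaryHypergeometricCoefficient a b c (n + 1) =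
      (a + n) * (b + n) * ordinaryHypergeometricCoefficient a b c n := by
  simp only [ordinaryHypergeometricCoefficient, ascPochhammer_succ_eval, Nat.factorial_succ,
    Nat.cast_mul, Nat.cast_succ, mul_inv]
  field_simp

lemma pfaffSaalschutz_telescope (a b : 𝕂) {c : 𝕂} {k : ℕ} (hc : c + k ≠ 0) (m : ℕ) :
    ((k + m + 1) * (c + (k + m)) * negBinomialCoeff (a + b - c) (m + 1)
        - (a + (k + m)) * (b + (k + m)) * negBinomialCoeff (a + b - c) m)
        * ordinaryHypergeometricCoefficient (c - a) (c - b) c k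
      = k * (c + k - 1) * ordinaryHypergeometricCoefficient (c - a) (c - b) c k
          * negBinomialCoeff (a + b - c) (m + 1)
        - (k + 1) * (c + k) * ordinaryHypergeometricCoefficient (c - a) (c - b) c (k + 1)
          * negBinomialCoeff (a + b - c) m := by
  have hu := succ_mul_ordinaryHypergeometricCoefficient_succ (c - a) (c - b) c hc
  have hv := succ_mul_negBinomialCoeff_succ (a + b - c) m
  -- `(k+m+1)(c+k+m) - k(c+k-1) = (m+1)(c+m+2k)` and
  -- `(a+k+m)(b+k+m) - (c-a+k)(c-b+k) = (c+m+2k)(a+b-c+m)`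
  linear_combination
    (ordinaryHypergeometricCoefficient (c - a) (c - b) c k * (c + m + 2 * k)) * hv
      + negBinomialCoeff (a + b - c) m * hu

lemma succ_mul_pfaffSaalschutzSum_succ (a b : 𝕂) {c : 𝕂} (hc : ∀ k : ℕ, c + k ≠ 0) (n : ℕ) :
    (n + 1) * (c + n) * pfaffSaalschutzSum a b c (n + 1)
      = (a + n) * (b + n) * pfaffSaalschutzSum a b c n := by
  set u := ordinaryHypergeometricCoefficient (c - a) (c - b) c
  set v := negBinomialCoeff (a + b - c)
  set F : ℕ → 𝕂 := fun k => k * (c + k - 1) * u k * v (n + 1 - k)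
  have telescope : ∀ k ∈ range (n + 1),
      (n + 1) * (c + n) * (u k * v (n + 1 - k)) - (a + n) * (b + n) * (u k * v (n - k))
        = F k - F (k + 1) := by
    intro k hk
    obtain ⟨m, rfl⟩ := Nat.exists_eq_add_of_le (Nat.lt_succ_iff.mp (mem_range.mp hk))
    simp only [F, Nat.add_sub_cancel_left, show k + m + 1 - k = m + 1 by omega,
      show k + m + 1 - (k + 1) = m by omega]
    push_cast
    linear_combination pfaffSaalschutz_telescope a b (hc k) m
  have hsum := sum_range_sub' F (n + 1)
  rw [← sum_congr rfl telescope, sum_sub_distrib, ← mul_sum, ← mul_sum] at hsum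
  simp only [F, Nat.cast_zero, zero_mul, Nat.sub_self] at hsum
  push_cast at hsum
  rw [pfaffSaalschutzSum, pfaffSaalschutzSum, sum_range_succ, Nat.sub_self, mul_add]
  linear_combination hsum

theorem pfaffSaalschutzSum_eq (a b : 𝕂) {c : 𝕂} (hc : ∀ k : ℕ, c + k ≠ 0) (n : ℕ) :
    pfaffSaalschutzSum a b c n = ordinaryHypergeometricCoefficient a b c n := by
  induction n with
  | zero => simp [pfaffSaalschutzSum, negBinomialCoeff]
  | succ n ih =>
    refine mul_left_cancel₀ (mul_ne_zero (Nat.cast_add_one_ne_zero n) (hc n)) ?_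
    rw [succ_mul_pfaffSaalschutzSum_succ a b hc, ih,
      succ_mul_ordinaryHypergeometricCoefficient_succ a b c (hc n)]

end Coefficients

section PowerSeries

open FormalMultilinearSeries

variable {𝕜 : Type*} [NontriviallyNormedField 𝕜]

lemma summable_norm_mul_pow_of_mem_eball {c : ℕ → 𝕜} {z : 𝕜}
    (hz : z ∈ Metric.eball 0 (ofScalars 𝕜 c).radius) : Summable fun n => ‖c n * z ^ n‖ :=
  ((ofScalars 𝕜 c).summable_norm_apply hz).congr fun n => by
    rw [ofScalars_apply_eq, smul_eq_mul]

lemma tsum_mul_pow_mul_tsum_mul_pow [CompleteSpace 𝕜] {f g : ℕ → 𝕜} {z : 𝕜}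
    (hf : Summable fun n => ‖f n * z ^ n‖) (hg : Summable fun n => ‖g n * z ^ n‖) :
    (∑' n, f n * z ^ n) * ∑' n, g n * z ^ n
      = ∑' n, (∑ k ∈ range (n + 1), f k * g (n - k)) * z ^ n := by
  rw [tsum_mul_tsum_eq_tsum_sum_range_of_summable_norm hf hg]
  refine tsum_congr fun n => ?_
  rw [sum_mul]
  refine sum_congr rfl fun k hk => ?_
  rw [← pow_mul_pow_sub z (Nat.lt_succ_iff.mp (mem_range.mp hk))]
  ring

end PowerSeries

theorem one_le_radius_ordinaryHypergeometricSeries {𝕂 : Type*} (𝔸 : Type*) [RCLike 𝕂]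
    [NormedDivisionRing 𝔸] [NormedAlgebra 𝕂 𝔸] (a b : 𝕂) {c : 𝕂}
    (hc : ∀ k : ℕ, (k : 𝕂) ≠ -c) :
    1 ≤ (ordinaryHypergeometricSeries 𝔸 a b c).radius := by
  by_cases ha : ∃ k : ℕ, (k : 𝕂) = -a
  · obtain ⟨k, hk⟩ := ha
    rw [neg_eq_iff_eq_neg.mp hk.symm, ordinaryHypergeometric_radius_top_of_neg_nat₁]
    exact le_top
  by_cases hb : ∃ k : ℕ, (k : 𝕂) = -b
  · obtain ⟨k, hk⟩ := hb
    rw [neg_eq_iff_eq_neg.mp hk.symm, ordinaryHypergeometric_radius_top_of_neg_nat₂]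
    exact le_top
  push Not at ha hb
  rw [ordinaryHypergeometricSeries_radius_eq_one 𝔸 a b c fun k => ⟨ha k, hb k, hc k⟩]

namespace Complex

theorem hasFPowerSeriesOnBall_one_div_one_sub_cpow (s : ℂ) :
    HasFPowerSeriesOnBall (fun x ↦ 1 / (1 - x) ^ s)
      (FormalMultilinearSeries.ofScalars ℂ (negBinomialCoeff s)) 0 1 := by
  rw [funext (negBinomialCoeff_eq_choose s)]
  exact one_div_one_sub_cpow_hasFPowerSeriesOnBall_zero s

end Complex

lemma mem_eball_zero_one {E : Type*} [SeminormedAddGroup E] {z : E} (hz : ‖z‖ < 1) :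
    z ∈ Metric.eball (0 : E) 1 := by
  rwa [mem_eball_zero_iff, ← ofReal_norm, ENNReal.ofReal_lt_one]

lemma summable_norm_ordinaryHypergeometricCoefficient_mul_pow (a b : ℂ) {c z : ℂ}
    (hc : ∀ k : ℕ, (k : ℂ) ≠ -c) (hz : ‖z‖ < 1) :
    Summable fun n => ‖ordinaryHypergeometricCoefficient a b c n * z ^ n‖ :=
  summable_norm_mul_pow_of_mem_eball <|
    Metric.eball_subset_eball (one_le_radius_ordinaryHypergeometricSeries ℂ a b hc)
      (mem_eball_zero_one hz)

lemma summable_norm_negBinomialCoeff_mul_pow (s : ℂ) {z : ℂ} (hz : ‖z‖ < 1) :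
    Summable fun n => ‖negBinomialCoeff s n * z ^ n‖ :=
  summable_norm_mul_pow_of_mem_eball <|
    Metric.eball_subset_eball (Complex.hasFPowerSeriesOnBall_one_div_one_sub_cpow s).r_le
      (mem_eball_zero_one hz)

lemma one_sub_cpow_neg_eq_tsum (s : ℂ) {z : ℂ} (hz : ‖z‖ < 1) :
    (1 - z) ^ (-s) = ∑' n, negBinomialCoeff s n * z ^ n := by
  have h :=
    (Complex.hasFPowerSeriesOnBall_one_div_one_sub_cpow s).hasSum (mem_eball_zero_one hz)
  simp only [FormalMultilinearSeries.ofScalars_apply_eq, smul_eq_mul, zero_add] at h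
  rw [h.tsum_eq, Complex.cpow_neg, one_div]

/-- Euler transformation: `₂F₁(a,b;c;z) = (1−z)^{c−a−b} ₂F₁(c−a,c−b;c;z)` for `|z| < 1`. -/
theorem stmt8 (a b c z : ℂ) (hc : ∀ n : ℕ, c ≠ -(n : ℂ)) (hz : ‖z‖ < 1) :
    hyp2F1 a b c z = (1 - z) ^ (c - a - b) * hyp2F1 (c - a) (c - b) c z := by
  have hc' : ∀ k : ℕ, (k : ℂ) ≠ -c := fun k h => hc k (neg_eq_iff_eq_neg.mp h.symm)
  have hck : ∀ k : ℕ, c + k ≠ 0 := fun k h => hc' k (eq_neg_of_add_eq_zero_right h)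
  rw [hyp2F1_eq_tsum, hyp2F1_eq_tsum, show c - a - b = -(a + b - c) by ring,
    one_sub_cpow_neg_eq_tsum _ hz, mul_comm, tsum_mul_pow_mul_tsum_mul_pow
      (summable_norm_ordinaryHypergeometricCoefficient_mul_pow _ _ hc' hz)
      (summable_norm_negBinomialCoeff_mul_pow _ hz)]
  exact tsum_congr fun n => congrArg (· * z ^ n) (pfaffSaalschutzSum_eq a b hck n).symm
end

section
/- Integral representation of the Gauss hypergeometric function: for Re c > Re b > 0 and z ∈ ℂ with |z| < 1, ₂F₁(a,b;c;z) = Γ(c)/(Γ(b)Γ(c−b)) ∫_0^1 t^{b−1} (1−t)^{c−b−1} (1−zt)^{-a} dt. -/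
open MeasureTheory

lemma poch_zero (a : ℂ) : poch a 0 = 1 := rfl
lemma poch_succ_eq (a : ℂ) (n : ℕ) : poch a (n + 1) = poch a n * (a + n) := rfl

lemma poch_succ (a : ℂ) (n : ℕ) : poch a (n + 1) = a * poch (a + 1) n := by
  induction n with
  | zero => simp [poch]
  | succ n ih =>
    rw [poch_succ_eq, ih, poch_succ_eq]
    push_cast
    ring

lemma poch_eq_zero_of {a : ℂ} {m : ℕ} (h : a + m = 0) {n : ℕ} (hn : m < n) : poch a n = 0 := by
  induction n with
  | zero => omega
  | succ n ih =>
    rcases Nat.lt_succ_iff_lt_or_eq.mp hn with h' | h'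
    · rw [poch_succ_eq, ih h', zero_mul]
    · subst h'; rw [poch_succ_eq, h, mul_zero]

lemma poch_ne_zero {a : ℂ} (h : ∀ k : ℕ, a + k ≠ 0) (n : ℕ) : poch a n ≠ 0 := by
  induction n with
  | zero => simp [poch]
  | succ n ih => exact mul_ne_zero ih (h n)

open Filter Topology

lemma tendsto_norm_add_div : ∀ (a : ℂ),
    Tendsto (fun n : ℕ => ‖a + n‖ / (n + 1)) atTop (𝓝 1) := by
  intro a
  have h1 : Tendsto (fun n : ℕ => (a - 1) / ((n : ℂ) + 1) + 1) atTop (𝓝 1) := by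
    have h0 : Tendsto (fun n : ℕ => (a - 1) / ((n : ℂ) + 1)) atTop (𝓝 0) := by
      rw [tendsto_zero_iff_norm_tendsto_zero]
      have : Tendsto (fun n : ℕ => ‖a - 1‖ / (n : ℝ)) atTop (𝓝 0) :=
        tendsto_const_div_atTop_nhds_zero_nat _
      have h2 := this.comp (tendsto_add_atTop_nat 1)
      refine h2.congr fun n => ?_
      simp only [Function.comp_apply, norm_div]
      rw [show ((n : ℂ) + 1) = ((n + 1 : ℕ) : ℂ) by push_cast; ring, Complex.norm_natCast]
    simpa using h0.add (tendsto_const_nhds (x := (1 : ℂ)))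
  have h2 := (continuous_norm.tendsto (1 : ℂ)).comp h1
  simp only [norm_one] at h2
  refine h2.congr fun n => ?_
  simp only [Function.comp_apply]
  have hne : ((n : ℂ) + 1) ≠ 0 := by
    rw [show ((n : ℂ) + 1) = ((n + 1 : ℕ) : ℂ) by push_cast; ring]
    exact Nat.cast_ne_zero.mpr (Nat.succ_ne_zero n)
  rw [show (a - 1) / ((n : ℂ) + 1) + 1 = (a + n) / ((n : ℂ) + 1) by field_simp; ring]
  rw [norm_div, show ((n : ℂ) + 1) = ((n + 1 : ℕ) : ℂ) by push_cast; ring,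
    Complex.norm_natCast]
  push_cast; ring

lemma summable_poch (a : ℂ) {r : ℝ} (h0 : 0 ≤ r) (h1 : r < 1) :
    Summable (fun n : ℕ => ‖poch a n‖ / n.factorial * r ^ n) := by
  by_cases hz : ∃ m : ℕ, a + m = 0
  · obtain ⟨m, hm⟩ := hz
    apply summable_of_ne_finset_zero (s := Finset.range (m + 1))
    intro n hn
    rw [poch_eq_zero_of hm (by simpa using hn)]
    simp
  · push_neg at hz
    rcases eq_or_lt_of_le h0 with h0 | h0
    · apply summable_of_ne_finset_zero (s := Finset.range 1)
      intro n hn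
      have : n ≠ 0 := by simpa using hn
      rw [← h0, zero_pow this, mul_zero]
    · have hpne : ∀ n, poch a n ≠ 0 := poch_ne_zero hz
      apply summable_of_ratio_test_tendsto_lt_one h1
      · filter_upwards with n
        have hp : (0:ℝ) < ‖poch a n‖ := norm_pos_iff.mpr (hpne n)
        positivity
      · have key : ∀ n : ℕ, ‖‖poch a (n+1)‖ / (n+1).factorial * r ^ (n+1)‖ /
            ‖‖poch a n‖ / n.factorial * r ^ n‖ = ‖a + n‖ / (n + 1) * r := by
          intro n
          have hfn : ((n.factorial : ℝ)) ≠ 0 := by positivity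
          have hrn : r ^ n ≠ 0 := by positivity
          have hp : ‖poch a n‖ ≠ 0 := norm_ne_zero_iff.mpr (hpne n)
          have hp : (0:ℝ) < ‖poch a n‖ := norm_pos_iff.mpr (hpne n)
          rw [Real.norm_of_nonneg (by positivity), Real.norm_of_nonneg (by positivity)]
          rw [poch_succ_eq, norm_mul, Nat.factorial_succ]
          push_cast
          rw [pow_succ]
          have hn1 : ((n:ℝ) + 1) ≠ 0 := by positivity
          rw [div_eq_iff (by positivity : ‖poch a n‖ / (n.factorial:ℝ) * r ^ n ≠ 0)]
          field_simp
        have := (tendsto_norm_add_div a).mul_const r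
        rw [one_mul] at this
        exact this.congr fun n => (key n).symm

noncomputable def cc (a : ℂ) (n : ℕ) : ℂ := poch a n / n.factorial

lemma cc_zero (a : ℂ) : cc a 0 = 1 := by simp [cc, poch_zero]

lemma norm_cc (a : ℂ) (n : ℕ) : ‖cc a n‖ = ‖poch a n‖ / n.factorial := by
  rw [cc, norm_div, Complex.norm_natCast]

lemma cc_rec (a : ℂ) (n : ℕ) : cc a (n + 1) * (n + 1) = (a + n) * cc a n := by
  have h1 : ((n.factorial : ℂ)) ≠ 0 := Nat.cast_ne_zero.mpr n.factorial_ne_zero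
  have h2 : ((n : ℂ) + 1) ≠ 0 := by
    rw [show ((n : ℂ) + 1) = ((n + 1 : ℕ) : ℂ) by push_cast; ring]
    exact Nat.cast_ne_zero.mpr (Nat.succ_ne_zero n)
  rw [cc, cc, poch_succ_eq, Nat.factorial_succ]
  push_cast
  field_simp

lemma summable_norm_cc (a : ℂ) {r : ℝ} (h0 : 0 ≤ r) (h1 : r < 1) :
    Summable (fun n : ℕ => ‖cc a n‖ * r ^ n) := by
  simpa only [norm_cc] using summable_poch a h0 h1

lemma summable_cc (a : ℂ) {w : ℂ} (hw : ‖w‖ < 1) :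
    Summable (fun n : ℕ => cc a n * w ^ n) := by
  apply Summable.of_norm
  have := summable_norm_cc a (norm_nonneg w) hw
  refine this.congr fun n => ?_
  rw [norm_mul, norm_pow]

lemma summable_norm_cc_succ (a : ℂ) {r : ℝ} (h0 : 0 ≤ r) (h1 : r < 1) :
    Summable (fun n : ℕ => ‖cc a (n + 1)‖ * (n + 1) * r ^ n) := by
  have heq : (fun n : ℕ => ‖cc a (n + 1)‖ * (n + 1) * r ^ n)
      = fun n => ‖a‖ * (‖poch (a + 1) n‖ / n.factorial * r ^ n) := by
    funext n
    have hfn : ((n.factorial : ℝ)) ≠ 0 := by positivity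
    have hn1 : ((n : ℝ) + 1) ≠ 0 := by positivity
    rw [norm_cc, poch_succ, norm_mul, Nat.factorial_succ]
    push_cast
    field_simp
  rw [heq]
  exact (summable_poch (a + 1) h0 h1).mul_left _

lemma summable_cc_succ (a : ℂ) {w : ℂ} (hw : ‖w‖ < 1) :
    Summable (fun n : ℕ => cc a (n + 1) * (n + 1) * w ^ n) := by
  apply Summable.of_norm
  refine (summable_norm_cc_succ a (norm_nonneg w) hw).congr fun n => ?_
  rw [norm_mul, norm_mul, norm_pow]
  congr 2
  rw [show ((n : ℂ) + 1) = ((n + 1 : ℕ) : ℂ) by push_cast; ring, Complex.norm_natCast]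
  push_cast
  ring

lemma summable_n_cc (a : ℂ) {w : ℂ} (hw : ‖w‖ < 1) :
    Summable (fun n : ℕ => (n : ℂ) * cc a n * w ^ n) := by
  apply (summable_nat_add_iff 1).mp
  have := (summable_cc_succ a hw).mul_right w
  refine this.congr fun n => ?_
  push_cast
  ring

lemma hasDerivAt_G (a : ℂ) {v : ℂ} (hv : ‖v‖ < 1) :
    HasDerivAt (fun z : ℂ => ∑' n : ℕ, cc a n * z ^ n)
      (∑' n : ℕ, cc a (n + 1) * (n + 1) * v ^ n) v := by
  set r : ℝ := (‖v‖ + 1) / 2 with hr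
  have hr0 : 0 < r := by positivity
  have hrv : ‖v‖ < r := by rw [hr]; linarith
  have hr1 : r < 1 := by rw [hr]; linarith
  set u : ℕ → ℝ := fun n => ‖cc a n‖ * n * r ^ (n - 1) with hu
  have husum : Summable u := by
    apply (summable_nat_add_iff 1).mp
    refine (summable_norm_cc_succ a hr0.le hr1).congr fun n => ?_
    simp only [hu, Nat.add_sub_cancel]
    push_cast
    ring
  have hmem : v ∈ Metric.ball (0 : ℂ) r := by simpa using hrv
  have h0mem : (0 : ℂ) ∈ Metric.ball (0 : ℂ) r := by simpa using hr0
  have key := hasDerivAt_tsum_of_isPreconnected husum Metric.isOpen_ball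
    (convex_ball (0:ℂ) r).isPreconnected
    (g := fun n z => cc a n * z ^ n)
    (g' := fun n y => cc a n * (n * y ^ (n - 1)))
    (fun n y _ => (hasDerivAt_pow n y).const_mul (cc a n))
    (fun n y hy => by
      have hyr : ‖y‖ ≤ r := le_of_lt (by simpa using hy)
      rw [norm_mul, norm_mul, norm_pow, Complex.norm_natCast]
      simp only [hu]
      rw [mul_assoc]
      refine mul_le_mul_of_nonneg_left ?_ (norm_nonneg _)
      exact mul_le_mul_of_nonneg_left
        (pow_le_pow_left₀ (norm_nonneg y) hyr _) (Nat.cast_nonneg n))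
    h0mem (summable_cc a (by simp)) hmem
  have hsum' : Summable (fun n : ℕ => cc a n * ((n : ℂ) * v ^ (n - 1))) := by
    apply Summable.of_norm
    refine husum.of_nonneg_of_le (fun n => norm_nonneg _) fun n => ?_
    rw [norm_mul, norm_mul, norm_pow, Complex.norm_natCast]
    simp only [hu]
    rw [mul_assoc]
    refine mul_le_mul_of_nonneg_left ?_ (norm_nonneg _)
    exact mul_le_mul_of_nonneg_left
      (pow_le_pow_left₀ (norm_nonneg v) hrv.le _) (Nat.cast_nonneg n)
  refine key.congr_deriv ?_
  symm
  rw [Summable.tsum_eq_zero_add hsum']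
  simp only [Nat.cast_zero, zero_mul, mul_zero, zero_add]
  refine tsum_congr fun n => ?_
  push_cast
  ring

lemma funEq (a : ℂ) {v : ℂ} (hv : ‖v‖ < 1) :
    (1 - v) * (∑' n : ℕ, cc a (n + 1) * (n + 1) * v ^ n)
      = a * ∑' n : ℕ, cc a n * v ^ n := by
  have S1 := summable_cc a hv
  have S2 := summable_cc_succ a hv
  have S3 := summable_n_cc a hv
  have hD : (∑' n : ℕ, cc a (n + 1) * (n + 1) * v ^ n)
      = ∑' n : ℕ, (a + n) * cc a n * v ^ n := by
    refine tsum_congr fun n => ?_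
    rw [show cc a (n + 1) * (n + 1) * v ^ n = (cc a (n + 1) * ((n:ℂ) + 1)) * v ^ n by ring,
      cc_rec]
  have S2' : Summable (fun n : ℕ => (a + n) * cc a n * v ^ n) := by
    refine S2.congr fun n => ?_
    rw [show cc a (n + 1) * (n + 1) * v ^ n = (cc a (n + 1) * ((n:ℂ) + 1)) * v ^ n by ring,
      cc_rec]
  have hvD : v * (∑' n : ℕ, cc a (n + 1) * (n + 1) * v ^ n)
      = ∑' n : ℕ, (n : ℂ) * cc a n * v ^ n := by
    rw [Summable.tsum_eq_zero_add S3]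
    simp only [Nat.cast_zero, zero_mul, zero_add]
    rw [← tsum_mul_left]
    refine tsum_congr fun n => ?_
    push_cast
    ring
  rw [sub_mul, one_mul, hvD, hD, ← Summable.tsum_sub S2' S3]
  rw [← tsum_mul_left]
  refine tsum_congr fun n => ?_
  ring

lemma hasSum_binomial (a w : ℂ) (hw : ‖w‖ < 1) :
    HasSum (fun n : ℕ => poch a n / n.factorial * w ^ n) ((1 - w) ^ (-a)) := by
  have hmain : ∀ v : ℂ, ‖v‖ < 1 → (∑' n : ℕ, cc a n * v ^ n) * (1 - v) ^ a = 1 := by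
    set h : ℂ → ℂ := fun v => (∑' n : ℕ, cc a n * v ^ n) * (1 - v) ^ a with hh
    have hsub : ∀ v : ℂ, ‖v‖ < 1 → (1 : ℂ) - v ≠ 0 := by
      intro v hv hc
      rw [sub_eq_zero] at hc
      rw [← hc] at hv
      simp at hv
    have hslit : ∀ v : ℂ, ‖v‖ < 1 → (1 - v) ∈ Complex.slitPlane := by
      intro v hv
      apply Complex.mem_slitPlane_iff.mpr
      left
      have : v.re ≤ ‖v‖ := Complex.re_le_norm v
      simp only [Complex.sub_re, Complex.one_re]
      linarith
    have hderiv : ∀ v ∈ Metric.ball (0 : ℂ) 1, HasDerivAt h 0 v := by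
      intro v hv
      rw [mem_ball_zero_iff] at hv
      have hG := hasDerivAt_G a hv
      have hP : HasDerivAt (fun v : ℂ => (1 - v) ^ a)
          (a * (1 - v) ^ (a - 1) * (-1)) v :=
        HasDerivAt.cpow_const ((hasDerivAt_id v).const_sub 1) (hslit v hv)
      have := hG.mul hP
      refine this.congr_deriv ?_
      symm
      have hsplit : (1 - v) ^ a = (1 - v) ^ (a - 1) * (1 - v) := by
        conv_lhs => rw [show a = a - 1 + 1 by ring]
        rw [Complex.cpow_add _ _ (hsub v hv), Complex.cpow_one]
      rw [hsplit]
      have hfe := funEq a hv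
      linear_combination (-(1 - v) ^ (a - 1)) * hfe
    have hconst : ∀ v ∈ Metric.ball (0 : ℂ) 1, h v = h 0 := by
      intro v hv
      refine (convex_ball (0:ℂ) 1).is_const_of_fderivWithin_eq_zero
        (fun x hx => ((hderiv x hx).differentiableAt).differentiableWithinAt)
        (fun x hx => ?_) hv (by simp)
      rw [fderivWithin_eq_fderiv (Metric.isOpen_ball.uniqueDiffWithinAt hx)
        ((hderiv x hx).differentiableAt)]
      have := (hderiv x hx).hasFDerivAt.fderiv
      rw [this]
      ext y
      simp
    have h0 : h 0 = 1 := by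
      rw [hh]
      simp only [sub_zero, Complex.one_cpow, mul_one]
      rw [tsum_eq_single 0 (fun n hn => by simp [zero_pow hn])]
      simp [cc_zero]
    intro v hv
    exact (hconst v (by simpa using hv)).trans h0
  have hS := summable_cc a hw
  have hX : (1 - w) ^ a ≠ 0 := by
    intro hc
    rcases (Complex.cpow_eq_zero_iff _ _).mp hc with ⟨h1, _⟩
    exact (by
      intro hc2
      rw [sub_eq_zero] at hc2
      rw [← hc2] at hw
      simp at hw : (1:ℂ) - w ≠ 0) h1
  have hval : (∑' n : ℕ, cc a n * w ^ n) = (1 - w) ^ (-a) := by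
    rw [Complex.cpow_neg, inv_eq_one_div, eq_div_iff hX]
    exact hmain w hw
  have := hS.hasSum
  rw [hval] at this
  exact this.congr_fun fun n => by rw [cc]

lemma betaKernel_integrableOn {u v : ℂ} (hu : 0 < u.re) (hv : 0 < v.re) :
    MeasureTheory.IntegrableOn
      (fun t : ℝ => (t:ℂ) ^ (u - 1) * (1 - (t:ℂ)) ^ (v - 1)) (Set.Ioo (0:ℝ) 1) :=
  (Complex.betaIntegral_convergent hu hv).1.mono_set Set.Ioo_subset_Ioc_self

lemma betaKernel_integral (u v : ℂ) :
    ∫ t in Set.Ioo (0:ℝ) 1, (t:ℂ) ^ (u - 1) * (1 - (t:ℂ)) ^ (v - 1)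
      = Complex.betaIntegral u v := by
  rw [Complex.betaIntegral, intervalIntegral.integral_of_le zero_le_one,
    MeasureTheory.integral_Ioc_eq_integral_Ioo]

lemma Gamma_poch {q : ℂ} (hq : 0 < q.re) (n : ℕ) :
    Complex.Gamma (q + n) = poch q n * Complex.Gamma q := by
  induction n with
  | zero => simp [poch_zero]
  | succ n ih =>
    have hne : q + (n : ℂ) ≠ 0 := by
      intro h
      have h2 := congrArg Complex.re h
      rw [Complex.add_re, Complex.natCast_re, Complex.zero_re] at h2
      have : (0:ℝ) ≤ n := Nat.cast_nonneg n
      linarith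
    rw [show q + ((n + 1 : ℕ) : ℂ) = (q + n) + 1 by push_cast; ring,
      Complex.Gamma_add_one _ hne, ih, poch_succ_eq]
    ring


/-- Euler integral representation of `₂F₁` for `Re c > Re b > 0` and `|z| < 1`. -/
theorem stmt11 (a b c z : ℂ) (hb : 0 < b.re) (hcb : b.re < c.re) (hz : ‖z‖ < 1) :
    hyp2F1 a b c z =
      Complex.Gamma c / (Complex.Gamma b * Complex.Gamma (c - b)) *
        ∫ t in Set.Ioo (0 : ℝ) 1,
          (t : ℂ) ^ (b - 1) * ((1 - t : ℝ) : ℂ) ^ (c - b - 1) * (1 - z * t) ^ (-a) := by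
  have hb0 : 0 < b.re := hb
  have hc0 : 0 < c.re := hb.trans hcb
  have hcb0 : 0 < (c - b).re := by rw [Complex.sub_re]; linarith
  have hbn : ∀ n : ℕ, 0 < (b + (n:ℂ)).re := by
    intro n
    rw [Complex.add_re, Complex.natCast_re]
    have : (0:ℝ) ≤ n := Nat.cast_nonneg n
    linarith
  have hGb := Complex.Gamma_ne_zero_of_re_pos hb0
  have hGc := Complex.Gamma_ne_zero_of_re_pos hc0
  have hGcb := Complex.Gamma_ne_zero_of_re_pos hcb0
  have hpc : ∀ n, poch c n ≠ 0 := by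
    apply poch_ne_zero
    intro k h
    have h2 := congrArg Complex.re h
    rw [Complex.add_re, Complex.natCast_re, Complex.zero_re] at h2
    have : (0:ℝ) ≤ k := Nat.cast_nonneg k
    linarith
  have hFint : ∀ n : ℕ, IntegrableOn
      (fun t : ℝ => (poch a n / n.factorial * z ^ n) *
        ((t:ℂ) ^ (b + n - 1) * (1 - (t:ℂ)) ^ (c - b - 1))) (Set.Ioo (0:ℝ) 1) :=
    fun n => (betaKernel_integrableOn (hbn n) hcb0).const_mul _
  have hnorm : ∀ (n : ℕ), ∀ t ∈ Set.Ioo (0:ℝ) 1,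
      ‖(t:ℂ) ^ (b + n - 1) * (1 - (t:ℂ)) ^ (c - b - 1)‖
        ≤ ‖(t:ℂ) ^ (b - 1) * (1 - (t:ℂ)) ^ (c - b - 1)‖ := by
    intro n t ht
    obtain ⟨ht0, ht1⟩ := ht
    rw [norm_mul, norm_mul]
    refine mul_le_mul_of_nonneg_right ?_ (norm_nonneg _)
    rw [Complex.norm_cpow_eq_rpow_re_of_pos ht0, Complex.norm_cpow_eq_rpow_re_of_pos ht0]
    apply Real.rpow_le_rpow_of_exponent_ge ht0 ht1.le
    simp only [Complex.sub_re, Complex.add_re, Complex.natCast_re, Complex.one_re]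
    have : (0:ℝ) ≤ n := Nat.cast_nonneg n
    linarith
  have hsumInt : Summable (fun n : ℕ => ∫ t in Set.Ioo (0:ℝ) 1,
      ‖(poch a n / n.factorial * z ^ n) *
        ((t:ℂ) ^ (b + n - 1) * (1 - (t:ℂ)) ^ (c - b - 1))‖) := by
    set R : ℝ := ∫ t in Set.Ioo (0:ℝ) 1,
      ‖(t:ℂ) ^ (b - 1) * (1 - (t:ℂ)) ^ (c - b - 1)‖ with hR
    have hsummaj : Summable (fun n : ℕ => ‖poch a n‖ / n.factorial * ‖z‖ ^ n * R) :=
      (summable_poch a (norm_nonneg z) hz).mul_right R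
    refine Summable.of_nonneg_of_le
      (fun n => integral_nonneg fun t => norm_nonneg _) (fun n => ?_) hsummaj
    have step1 : (∫ t in Set.Ioo (0:ℝ) 1,
        ‖(poch a n / n.factorial * z ^ n) *
          ((t:ℂ) ^ (b + n - 1) * (1 - (t:ℂ)) ^ (c - b - 1))‖)
        ≤ ∫ t in Set.Ioo (0:ℝ) 1, ‖poch a n / n.factorial * z ^ n‖ *
            ‖(t:ℂ) ^ (b - 1) * (1 - (t:ℂ)) ^ (c - b - 1)‖ := by
      refine setIntegral_mono_on ((hFint n).norm)
        (((betaKernel_integrableOn hb0 hcb0).norm).const_mul _)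
        measurableSet_Ioo (fun t ht => ?_)
      rw [norm_mul]
      exact mul_le_mul_of_nonneg_left (hnorm n t ht) (norm_nonneg _)
    refine step1.trans (le_of_eq ?_)
    rw [integral_const_mul]
    congr 1
    rw [norm_mul, norm_div, norm_pow, Complex.norm_natCast]
  have hpt : Set.EqOn
      (fun t : ℝ => (t : ℂ) ^ (b - 1) * ((1 - t : ℝ) : ℂ) ^ (c - b - 1) * (1 - z * t) ^ (-a))
      (fun t : ℝ => ∑' n : ℕ, (poch a n / n.factorial * z ^ n) *
        ((t:ℂ) ^ (b + n - 1) * (1 - (t:ℂ)) ^ (c - b - 1)))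
      (Set.Ioo (0:ℝ) 1) := by
    intro t ht
    obtain ⟨ht0, ht1⟩ := ht
    have ht0' : (t:ℂ) ≠ 0 := by exact_mod_cast ne_of_gt ht0
    have hzt : ‖z * (t:ℂ)‖ < 1 := by
      rw [norm_mul, Complex.norm_real, Real.norm_eq_abs, abs_of_pos ht0]
      calc ‖z‖ * t ≤ ‖z‖ * 1 := by
            exact mul_le_mul_of_nonneg_left ht1.le (norm_nonneg z)
        _ = ‖z‖ := mul_one _
        _ < 1 := hz
    have hbs := (hasSum_binomial a (z * t) hzt).mul_right
      ((t:ℂ) ^ (b - 1) * (1 - (t:ℂ)) ^ (c - b - 1))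
    simp only
    rw [show (t:ℂ) ^ (b - 1) * ((1 - t : ℝ) : ℂ) ^ (c - b - 1) * (1 - z * t) ^ (-a)
        = (1 - z * (t:ℂ)) ^ (-a) * ((t:ℂ) ^ (b - 1) * (1 - (t:ℂ)) ^ (c - b - 1)) by
      push_cast; ring]
    rw [← hbs.tsum_eq]
    refine tsum_congr fun n => ?_
    have hsplit : (t:ℂ) ^ (b + n - 1) = (t:ℂ) ^ (b - 1) * (t:ℂ) ^ (n : ℕ) := by
      rw [← Complex.cpow_natCast (t:ℂ) n, ← Complex.cpow_add _ _ ht0']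
      ring_nf
    rw [hsplit, mul_pow]
    ring
  rw [setIntegral_congr_fun measurableSet_Ioo hpt]
  rw [← MeasureTheory.integral_tsum_of_summable_integral_norm hFint hsumInt]
  rw [← tsum_mul_left]
  unfold hyp2F1
  refine tsum_congr fun n => ?_
  rw [integral_const_mul, betaKernel_integral (b + n) (c - b)]
  have h := Complex.Gamma_mul_Gamma_eq_betaIntegral (hbn n) hcb0
  rw [show b + (n:ℂ) + (c - b) = c + (n:ℂ) by ring] at h
  rw [Gamma_poch hb0 n, Gamma_poch hc0 n] at h
  have hBeq : Complex.betaIntegral (b + n) (c - b)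
      = poch b n * Complex.Gamma b * Complex.Gamma (c - b)
        / (poch c n * Complex.Gamma c) := by
    rw [eq_div_iff (mul_ne_zero (hpc n) hGc)]
    linear_combination -h
  rw [hBeq]
  have hfac : ((n.factorial : ℂ)) ≠ 0 := Nat.cast_ne_zero.mpr n.factorial_ne_zero
  have key : Complex.Gamma c / (Complex.Gamma b * Complex.Gamma (c - b)) *
      (poch b n * Complex.Gamma b * Complex.Gamma (c - b)
        / (poch c n * Complex.Gamma c)) = poch b n / poch c n := by
    rw [div_mul_div_comm, div_eq_div_iff
      (mul_ne_zero (mul_ne_zero hGb hGcb) (mul_ne_zero (hpc n) hGc)) (hpc n)]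
    ring
  symm
  calc Complex.Gamma c / (Complex.Gamma b * Complex.Gamma (c - b)) *
        (poch a n / n.factorial * z ^ n *
          (poch b n * Complex.Gamma b * Complex.Gamma (c - b)
            / (poch c n * Complex.Gamma c)))
      = Complex.Gamma c / (Complex.Gamma b * Complex.Gamma (c - b)) *
        (poch b n * Complex.Gamma b * Complex.Gamma (c - b)
          / (poch c n * Complex.Gamma c)) * (poch a n / n.factorial * z ^ n) := by
        ring
    _ = poch b n / poch c n * (poch a n / n.factorial * z ^ n) := by rw [key]
    _ = poch a n * poch b n / (poch c n * n.factorial) * z ^ n := by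
        field_simp
end

section
/- For distinct points x, y with x, y < 1 and parameters a, c (c not a non-positive integer, Re c > Re a > 0), the Appell function F₁ satisfies F₁(a;1,1;c;x,y) = (x ₂F₁(a,1;c;x) − y ₂F₁(a,1;c;y)) / (x − y). -/
/-!
Under the Euler integral, use the partial fraction decomposition
`(1 - x t)⁻¹ (1 - y t)⁻¹ = (x (1 - x t)⁻¹ - y (1 - y t)⁻¹) / (x - y)`.
Splitting the integral is legitimate because the beta kernel `t^(a-1) (1-t)^(c-a-1)` is integrable
on `(0, 1)` for `0 < Re a < Re c`, while `(1 - z t)⁻¹` is continuous on `[0, 1]` for `z < 1`.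
-/

open MeasureTheory

/-- The Appell function `F₁(a;1,1;c;x,y)` defined by its Euler integral. -/
noncomputable def appellF1 (a c : ℂ) (x y : ℝ) : ℂ :=
  Complex.Gamma c / (Complex.Gamma a * Complex.Gamma (c - a)) *
    ∫ t in Set.Ioo (0 : ℝ) 1,
      (t : ℂ) ^ (a - 1) * ((1 - t : ℝ) : ℂ) ^ (c - a - 1) *
        ((1 : ℂ) - x * t)⁻¹ * ((1 : ℂ) - y * t)⁻¹

/-- The Gauss hypergeometric function `₂F₁(a,1;c;z)` defined by its Euler integral. -/
noncomputable def gauss2F1 (a c : ℂ) (z : ℝ) : ℂ :=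
  Complex.Gamma c / (Complex.Gamma a * Complex.Gamma (c - a)) *
    ∫ t in Set.Ioo (0 : ℝ) 1,
      (t : ℂ) ^ (a - 1) * ((1 - t : ℝ) : ℂ) ^ (c - a - 1) * ((1 : ℂ) - z * t)⁻¹

open Set

lemma one_sub_mul_pos {z t : ℝ} (hz : z < 1) (ht : t ∈ Icc (0 : ℝ) 1) : 0 < 1 - z * t := by
  rcases le_or_gt z 0 with h | h <;> nlinarith [ht.1, ht.2]

lemma one_sub_ofReal_mul_ne_zero {z t : ℝ} (hz : z < 1) (ht : t ∈ Icc (0 : ℝ) 1) :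
    (1 : ℂ) - z * t ≠ 0 := by
  exact_mod_cast (one_sub_mul_pos hz ht).ne'

lemma inv_mul_inv_eq_div_sub_div {K : Type*} [Field K] {x y t : K} (hxy : x ≠ y)
    (hx : 1 - x * t ≠ 0) (hy : 1 - y * t ≠ 0) :
    (1 - x * t)⁻¹ * (1 - y * t)⁻¹ =
      (x * (1 - x * t)⁻¹ - y * (1 - y * t)⁻¹) / (x - y) := by
  rw [eq_div_iff (sub_ne_zero.mpr hxy)]
  linear_combination
    x * (1 - x * t)⁻¹ * mul_inv_cancel₀ hy - y * (1 - y * t)⁻¹ * mul_inv_cancel₀ hx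

lemma MeasureTheory.IntegrableOn.mul_inv_one_sub_ofReal_mul {F : ℝ → ℂ} {s : Set ℝ}
    {z : ℝ} (hF : IntegrableOn F s) (hs : MeasurableSet s) (hs01 : s ⊆ Icc 0 1) (hz : z < 1) :
    IntegrableOn (fun t : ℝ => F t * ((1 : ℂ) - z * t)⁻¹) s :=
  hF.mul_continuousOn_of_subset
    (ContinuousOn.inv₀ (by fun_prop) fun _ ht => one_sub_ofReal_mul_ne_zero hz ht)
    hs isCompact_Icc hs01

lemma setIntegral_mul_inv_mul_inv_eq {F : ℝ → ℂ} {s : Set ℝ} {x y : ℝ}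
    (hF : IntegrableOn F s) (hs : MeasurableSet s) (hs01 : s ⊆ Icc 0 1)
    (hx : x < 1) (hy : y < 1) (hxy : x ≠ y) :
    ∫ t in s, F t * ((1 : ℂ) - x * t)⁻¹ * ((1 : ℂ) - y * t)⁻¹ =
      ((x : ℂ) * (∫ t in s, F t * ((1 : ℂ) - x * t)⁻¹) -
        (y : ℂ) * (∫ t in s, F t * ((1 : ℂ) - y * t)⁻¹)) / ((x : ℂ) - y) := by
  rw [← integral_const_mul, ← integral_const_mul,
    ← integral_sub ((hF.mul_inv_one_sub_ofReal_mul hs hs01 hx).const_mul _)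
      ((hF.mul_inv_one_sub_ofReal_mul hs hs01 hy).const_mul _), ← integral_div]
  refine setIntegral_congr_fun hs fun t ht => ?_
  rw [mul_assoc, inv_mul_inv_eq_div_sub_div (Complex.ofReal_injective.ne hxy)
    (one_sub_ofReal_mul_ne_zero hx (hs01 ht)) (one_sub_ofReal_mul_ne_zero hy (hs01 ht))]
  ring

lemma integrableOn_betaKernel {a c : ℂ} (ha : 0 < a.re) (hac : a.re < c.re) :
    IntegrableOn (fun t : ℝ => (t : ℂ) ^ (a - 1) * ((1 - t : ℝ) : ℂ) ^ (c - a - 1))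
      (Ioo 0 1) := by
  have hca : 0 < (c - a).re := by rw [Complex.sub_re]; linarith
  have h := (Complex.betaIntegral_convergent ha hca).1.mono_set Ioo_subset_Ioc_self
  simpa only [Complex.ofReal_sub, Complex.ofReal_one] using h

theorem stmt13_general (a c : ℂ) (x y : ℝ) (ha : 0 < a.re) (hac : a.re < c.re)
    (hx : x < 1) (hy : y < 1) (hxy : x ≠ y) :
    appellF1 a c x y =
      ((x : ℂ) * gauss2F1 a c x - (y : ℂ) * gauss2F1 a c y) / ((x : ℂ) - y) := by
  rw [appellF1, gauss2F1, gauss2F1,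
    setIntegral_mul_inv_mul_inv_eq (integrableOn_betaKernel ha hac) measurableSet_Ioo
      Ioo_subset_Icc_self hx hy hxy]
  ring

/-- `F₁(a;1,1;c;x,y) = (x ₂F₁(a,1;c;x) − y ₂F₁(a,1;c;y)) / (x − y)` for distinct
`x, y < 1`. -/
theorem stmt13 (a c : ℂ) (x y : ℝ) (ha : 0 < a.re) (hac : a.re < c.re)
    (hc : ∀ n : ℕ, c ≠ -(n : ℂ)) (hx : x < 1) (hy : y < 1) (hxy : x ≠ y) :
    appellF1 a c x y =
      ((x : ℂ) * gauss2F1 a c x - (y : ℂ) * gauss2F1 a c y) / ((x : ℂ) - y) :=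
  stmt13_general a c x y ha hac hx hy hxy
end

section
/- Divided difference identity: for a parameter t ∈ (0,1) and distinct z₁,…,z_n all with z_j t ≠ 1, the n-point divided difference of f(z) = z^{n−1}(1−zt)^{-1} satisfies f[z₁,…,z_n] = ∏_{j=1}^n (1−z_j t)^{-1}. -/
/-!
Put `w = t⁻¹`, so that `(1 - z t)⁻¹ = t⁻¹ (w - z)⁻¹`. The divided difference of `z ^ (n - 1) / (w - z)`
is, up to the factor `∏ j, (w - z_j)`, the first barycentric form at `w` of the Lagrange interpolant
of `X ^ (n - 1)` on the `n` nodes; since that polynomial has degree `< n`, it is its own interpolant,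
and the value is `w ^ (n - 1) ∏ j, (w - z_j)⁻¹`. Multiplying by `t⁻¹ = w` gives `∏ j, (t (w - z_j))⁻¹`.
-/

namespace DividedDifference

open Finset Polynomial Lagrange

variable {K ι : Type*} [Field K] [DecidableEq ι]

/-- `nodalWeight s z l = ∏ j ∈ s.erase l, (z l - z j)⁻¹`. -/
def divDiff (s : Finset ι) (z : ι → K) (f : K → K) : K :=
  ∑ l ∈ s, f (z l) * nodalWeight s z l

theorem divDiff_const_mul (s : Finset ι) (z : ι → K) (a : K) (f : K → K) :
    divDiff s z (fun x => a * f x) = a * divDiff s z f := by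
  simp only [divDiff, mul_sum, mul_assoc]

theorem divDiff_pow_mul_inv_sub {s : Finset ι} {z : ι → K} {w : K} (hz : Set.InjOn z s)
    (hs : s.Nonempty) (hw : ∀ j ∈ s, w ≠ z j) :
    divDiff s z (fun x => x ^ (#s - 1) * (w - x)⁻¹) = w ^ (#s - 1) * ∏ j ∈ s, (w - z j)⁻¹ := by
  have hdeg : (X ^ (#s - 1) : K[X]).degree < #s := by
    rw [degree_X_pow]
    exact_mod_cast Nat.sub_lt hs.card_pos one_pos
  have hinterp : interpolate s z (fun i => z i ^ (#s - 1)) = X ^ (#s - 1) := by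
    simpa using (eq_interpolate hz hdeg).symm
  have barycentric := eval_interpolate_not_at_node (fun i => z i ^ (#s - 1)) hw
  rw [hinterp, eval_pow, eval_X, eval_nodal] at barycentric
  have hprod : ∏ j ∈ s, (w - z j) ≠ 0 :=
    prod_ne_zero_iff.mpr fun j hj => sub_ne_zero.mpr (hw j hj)
  rw [barycentric, prod_inv_distrib, mul_comm, ← mul_assoc, inv_mul_cancel₀ hprod, one_mul,
    divDiff]
  exact sum_congr rfl fun l _ => by ring

theorem divDiff_pow_mul_inv_one_sub_mul {s : Finset ι} {z : ι → K} {c : K}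
    (hz : Set.InjOn z s) (hs : s.Nonempty) (hc : c ≠ 0) (hzc : ∀ j ∈ s, z j * c ≠ 1) :
    divDiff s z (fun x => x ^ (#s - 1) * (1 - x * c)⁻¹) = ∏ j ∈ s, (1 - z j * c)⁻¹ := by
  have one_sub_mul_eq (x : K) : 1 - x * c = c * (c⁻¹ - x) := by field_simp
  have hw (j) (hj : j ∈ s) : c⁻¹ ≠ z j := fun h => hzc j hj (by rw [← h, inv_mul_cancel₀ hc])
  simp_rw [one_sub_mul_eq, mul_inv, mul_left_comm _ c⁻¹]
  rw [divDiff_const_mul, divDiff_pow_mul_inv_sub hz hs hw, ← mul_assoc, ← pow_succ',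
    Nat.sub_add_cancel hs.card_pos, ← prod_const, ← prod_mul_distrib]

end DividedDifference

open DividedDifference in
/-- Divided difference identity: the `n`-point divided difference of
`f(z) = z^{n−1}(1−zt)⁻¹` at distinct points `z₁,…,z_n` equals `∏_j (1−z_j t)⁻¹`. -/
theorem stmt14 (n : ℕ) (hn : 0 < n) (t : ℝ) (ht : t ∈ Set.Ioo (0 : ℝ) 1)
    (z : Fin n → ℂ) (hz : Function.Injective z) (hzt : ∀ j, z j * t ≠ 1) :
    ∑ l, (z l ^ (n - 1) * (1 - z l * t)⁻¹) *
        ∏ s ∈ Finset.univ.erase l, (z l - z s)⁻¹ =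
      ∏ j, (1 - z j * t)⁻¹ := by
  have hnodes : (Finset.univ : Finset (Fin n)).Nonempty :=
    Finset.univ_nonempty_iff.mpr ⟨⟨0, hn⟩⟩
  have ht0 : (t : ℂ) ≠ 0 := Complex.ofReal_ne_zero.mpr ht.1.ne'
  simpa [divDiff, Lagrange.nodalWeight] using
    divDiff_pow_mul_inv_one_sub_mul hz.injOn hnodes ht0 fun j _ => hzt j
end

section
/- Reduction of Lauricella F_D to Gauss hypergeometric by divided difference: for Re c > Re a > 0, c not a non-positive integer, and distinct z₁,…,z_n in a neighborhood of 0, F_D^{(n)}(a;1,…,1;c;z₁,…,z_n) = g[z₁,…,z_n], where g(z) = z^{n−1} ₂F₁(a,1;c;z) and g[z₁,…,z_n] = ∑_{l=1}^n g(z_l) ∏_{s≠l}(z_l − z_s)^{-1} is the divided difference. -/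
open MeasureTheory

lemma poch_one (k : ℕ) : poch 1 k = k.factorial := by
  induction k with
  | zero => simp [poch]
  | succ k ih => simp [poch, ih, Nat.factorial_succ]; ring

lemma poch_ne_zero_s15 {x : ℂ} (hx : ∀ m : ℕ, x + m ≠ 0) (k : ℕ) : poch x k ≠ 0 := by
  induction k with
  | zero => simp [poch]
  | succ k ih => exact mul_ne_zero ih (hx k)

lemma Gamma_add_nat {x : ℂ} (hx : ∀ m : ℕ, x + m ≠ 0) (k : ℕ) :
    Complex.Gamma (x + k) = poch x k * Complex.Gamma x := by
  induction k with
  | zero => simp [poch]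
  | succ k ih =>
      have : x + (k + 1 : ℕ) = (x + k) + 1 := by push_cast; ring
      rw [this, Complex.Gamma_add_one _ (hx k), ih, poch]; ring

lemma kernel_integrable {a c : ℂ} (ha : 0 < a.re) (hca : 0 < (c - a).re) :
    IntegrableOn (fun t : ℝ => (t : ℂ) ^ (a - 1) * ((1 - t : ℝ) : ℂ) ^ (c - a - 1))
      (Set.Ioo (0:ℝ) 1) volume := by
  have h := (Complex.betaIntegral_convergent ha hca)
  rw [intervalIntegrable_iff_integrableOn_Ioc_of_le zero_le_one] at h
  have h2 : IntegrableOn (fun x : ℝ => (x : ℂ) ^ (a - 1) * (1 - (x:ℂ)) ^ (c - a - 1))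
      (Set.Ioo (0:ℝ) 1) volume := h.mono_set Set.Ioo_subset_Ioc_self
  refine h2.congr_fun (fun x _ => ?_) measurableSet_Ioo
  push_cast; ring_nf

lemma euler_2F1 {a c : ℂ} (ha : 0 < a.re) (hac : a.re < c.re) {w : ℂ} (hw : ‖w‖ < 1) :
    Complex.Gamma c / (Complex.Gamma a * Complex.Gamma (c - a)) *
      ∫ t in Set.Ioo (0:ℝ) 1, (t : ℂ) ^ (a - 1) * ((1 - t : ℝ) : ℂ) ^ (c - a - 1) * (1 - w * t)⁻¹ =
    hyp2F1 a 1 c w := by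
  have hca : 0 < (c - a).re := by simp [Complex.sub_re]; linarith
  have hcr : 0 < c.re := ha.trans hac
  set μ := volume.restrict (Set.Ioo (0:ℝ) 1) with hμ
  set g : ℝ → ℂ := fun t => (t : ℂ) ^ (a - 1) * ((1 - t : ℝ) : ℂ) ^ (c - a - 1) with hg
  have hgint : Integrable g μ := kernel_integrable ha hca
  set F : ℕ → ℝ → ℂ := fun k t => g t * (w * t) ^ k with hF
  -- integrability and norm bounds of F k
  have hFmeas : ∀ k, AEStronglyMeasurable (F k) μ :=
    fun k => hgint.aestronglyMeasurable.mul
      ((Continuous.aestronglyMeasurable (by continuity : Continuous fun t : ℝ => (w * t) ^ k)))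
  have hFbound : ∀ k, ∀ᵐ t ∂μ, ‖F k t‖ ≤ ‖w‖ ^ k * ‖g t‖ := by
    intro k
    rw [hμ, ae_restrict_iff' measurableSet_Ioo]
    filter_upwards with t ht
    have h1 : ‖(w * (t:ℂ)) ^ k‖ ≤ ‖w‖ ^ k := by
      rw [norm_pow, norm_mul, Complex.norm_real, Real.norm_of_nonneg ht.1.le]
      exact pow_le_pow_left₀ (mul_nonneg (norm_nonneg w) ht.1.le) (by nlinarith [norm_nonneg w, ht.2.le]) k
    calc ‖F k t‖ = ‖g t‖ * ‖(w * (t:ℂ)) ^ k‖ := by rw [hF]; simp [norm_mul]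
      _ ≤ ‖g t‖ * ‖w‖ ^ k := by gcongr
      _ = ‖w‖ ^ k * ‖g t‖ := mul_comm _ _
  have hFint : ∀ k, Integrable (F k) μ := by
    intro k
    exact (hgint.norm.const_mul (‖w‖ ^ k)).mono' (hFmeas k) (hFbound k)
  have hFsum : Summable fun k => ∫ t, ‖F k t‖ ∂μ := by
    have hbd : ∀ k, ∫ t, ‖F k t‖ ∂μ ≤ ‖w‖ ^ k * ∫ t, ‖g t‖ ∂μ := by
      intro k
      calc ∫ t, ‖F k t‖ ∂μ ≤ ∫ t, ‖w‖ ^ k * ‖g t‖ ∂μ :=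
            integral_mono_ae (hFint k).norm (hgint.norm.const_mul _) (hFbound k)
        _ = ‖w‖ ^ k * ∫ t, ‖g t‖ ∂μ := integral_const_mul _ _
    refine Summable.of_nonneg_of_le (fun k => integral_nonneg fun t => norm_nonneg _) hbd ?_
    exact (summable_geometric_of_lt_one (norm_nonneg w) hw).mul_right _
  -- swap sum and integral
  have hswap := integral_tsum_of_summable_integral_norm hFint hFsum
  -- pointwise sum
  have hpt : ∀ t ∈ Set.Ioo (0:ℝ) 1, (∑' k, F k t) = g t * (1 - w * t)⁻¹ := by
    intro t ht
    have hwt : ‖w * (t:ℂ)‖ < 1 := by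
      rw [norm_mul, Complex.norm_real, Real.norm_of_nonneg ht.1.le]
      nlinarith [norm_nonneg w, ht.2]
    rw [hF]
    simp only
    rw [tsum_mul_left, tsum_geometric_of_norm_lt_one hwt]
  have hint_eq : ∫ t, (∑' k, F k t) ∂μ
      = ∫ t in Set.Ioo (0:ℝ) 1, (t : ℂ) ^ (a - 1) * ((1 - t : ℝ) : ℂ) ^ (c - a - 1) * (1 - w * t)⁻¹ := by
    rw [hμ]
    exact setIntegral_congr_fun measurableSet_Ioo fun t ht => hpt t ht
  -- value of each integral
  have hval : ∀ k : ℕ, ∫ t, F k t ∂μ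
      = w ^ k * (Complex.Gamma (a + k) * Complex.Gamma (c - a) / Complex.Gamma (c + k)) := by
    intro k
    have hbeta : Complex.Gamma (a + k) * Complex.Gamma (c - a)
        = Complex.Gamma (c + k) * Complex.betaIntegral (a + k) (c - a) := by
      have := Complex.Gamma_mul_Gamma_eq_betaIntegral
        (s := a + k) (t := c - a) (by simp [Complex.add_re, Complex.natCast_re]; positivity) hca
      rwa [show a + k + (c - a) = c + k by ring] at this
    have hbi : Complex.betaIntegral (a + k) (c - a)
        = ∫ t in Set.Ioo (0:ℝ) 1, (t:ℂ) ^ (a + k - 1) * (1 - (t:ℂ)) ^ (c - a - 1) := by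
      rw [Complex.betaIntegral, intervalIntegral.integral_of_le zero_le_one,
        integral_Ioc_eq_integral_Ioo]
    have : ∫ t, F k t ∂μ = ∫ t in Set.Ioo (0:ℝ) 1,
        w ^ k * ((t:ℂ) ^ (a + k - 1) * (1 - (t:ℂ)) ^ (c - a - 1)) := by
      rw [hμ]
      refine setIntegral_congr_fun measurableSet_Ioo fun t ht => ?_
      have ht0 : (t:ℂ) ≠ 0 := by exact_mod_cast ne_of_gt ht.1
      rw [hF, hg]
      simp only
      rw [mul_pow, show ((w:ℂ))^k * (t:ℂ)^k = w^k * ((t:ℂ)^(k:ℂ)) by rw [Complex.cpow_natCast],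
        show a + k - 1 = (a - 1) + k by ring, Complex.cpow_add _ _ ht0, Complex.cpow_natCast]
      push_cast
      ring
    rw [this, integral_const_mul, hbeta, ← hbi]
    have hgc : Complex.Gamma (c + k) ≠ 0 :=
      Complex.Gamma_ne_zero_of_re_pos (by simp [Complex.add_re, Complex.natCast_re]; positivity)
    field_simp
  -- put it all together
  rw [← hint_eq, ← hswap]
  rw [hyp2F1]
  rw [← tsum_mul_left]
  refine tsum_congr fun k => ?_
  rw [hval k]
  have hGa : Complex.Gamma a ≠ 0 := Complex.Gamma_ne_zero_of_re_pos ha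
  have hGc : Complex.Gamma c ≠ 0 := Complex.Gamma_ne_zero_of_re_pos hcr
  have hGca : Complex.Gamma (c - a) ≠ 0 := Complex.Gamma_ne_zero_of_re_pos hca
  have hane : ∀ m : ℕ, a + m ≠ 0 := by
    intro m h
    have := congrArg Complex.re h
    simp [Complex.add_re, Complex.natCast_re] at this
    have : (0:ℝ) ≤ (m:ℝ) := Nat.cast_nonneg m
    linarith [ha]
  have hcne : ∀ m : ℕ, c + m ≠ 0 := by
    intro m h
    have := congrArg Complex.re h
    simp [Complex.add_re, Complex.natCast_re] at this
    have : (0:ℝ) ≤ (m:ℝ) := Nat.cast_nonneg m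
    linarith [hcr]
  rw [Gamma_add_nat hane, Gamma_add_nat hcne, poch_one]
  have hpc : poch c k ≠ 0 := poch_ne_zero_s15 hcne k
  have hfac : ((k.factorial : ℂ)) ≠ 0 := by exact_mod_cast k.factorial_ne_zero
  field_simp

section main
open Finset Polynomial

lemma lag_id (n : ℕ) (hn : 0 < n) (z : Fin n → ℂ) (hinj : Function.Injective z) (x : ℂ) :
    ∑ l, z l ^ (n-1) * ∏ s ∈ Finset.univ.erase l, ((z l - z s)⁻¹ * (x - z s)) = x ^ (n-1) := by
  have hdeg : ((Polynomial.X : ℂ[X]) ^ (n-1)).degree < (Finset.univ : Finset (Fin n)).card := by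
    rw [Polynomial.degree_X_pow, Finset.card_univ, Fintype.card_fin]
    exact_mod_cast Nat.sub_lt hn one_pos
  have h := Lagrange.eq_interpolate (v := z) (s := Finset.univ) hinj.injOn hdeg
  have := congrArg (Polynomial.eval x) h
  simp only [Polynomial.eval_pow, Polynomial.eval_X, Lagrange.interpolate_apply,
    Polynomial.eval_finset_sum, Polynomial.eval_mul, Polynomial.eval_C, Lagrange.basis,
    Polynomial.eval_prod, Lagrange.basisDivisor, Polynomial.eval_sub] at this
  rw [← this]

lemma partial_frac (n : ℕ) (hn : 0 < n) (z : Fin n → ℂ) (hinj : Function.Injective z)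
    (u : ℂ) (hu : u ≠ 0) (h1 : ∀ j, 1 - z j * u ≠ 0) :
    ∏ j, (1 - z j * u)⁻¹ =
      ∑ l, (z l ^ (n-1) * ∏ s ∈ Finset.univ.erase l, (z l - z s)⁻¹) * (1 - z l * u)⁻¹ := by
  have key : ∑ l, z l ^ (n-1) * ∏ s ∈ Finset.univ.erase l, ((z l - z s)⁻¹ * (1 - z s * u)) = 1 := by
    have hlag := lag_id n hn z hinj u⁻¹
    have hcard : ∀ l : Fin n, (Finset.univ.erase l).card = n - 1 := by
      intro l; rw [Finset.card_erase_of_mem (Finset.mem_univ l), Finset.card_univ, Fintype.card_fin]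
    calc ∑ l, z l ^ (n-1) * ∏ s ∈ Finset.univ.erase l, ((z l - z s)⁻¹ * (1 - z s * u))
        = ∑ l, u ^ (n-1) * (z l ^ (n-1) * ∏ s ∈ Finset.univ.erase l, ((z l - z s)⁻¹ * (u⁻¹ - z s))) := by
          refine Finset.sum_congr rfl fun l _ => ?_
          have : ∀ s : Fin n, (z l - z s)⁻¹ * (1 - z s * u) = u * ((z l - z s)⁻¹ * (u⁻¹ - z s)) := by
            intro s
            have h : 1 - z s * u = u * (u⁻¹ - z s) := by
              rw [mul_sub, mul_inv_cancel₀ hu]; ring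
            rw [h]; ring
          rw [Finset.prod_congr rfl fun s _ => this s, Finset.prod_mul_distrib,
            Finset.prod_const, hcard l]; ring
      _ = u ^ (n-1) * (u⁻¹) ^ (n-1) := by rw [← Finset.mul_sum, hlag]
      _ = 1 := by rw [← mul_pow, mul_inv_cancel₀ hu, one_pow]
  have hP : ∏ j, (1 - z j * u) ≠ 0 := Finset.prod_ne_zero_iff.mpr fun j _ => h1 j
  calc ∏ j, (1 - z j * u)⁻¹
      = (∑ l, z l ^ (n-1) * ∏ s ∈ Finset.univ.erase l, ((z l - z s)⁻¹ * (1 - z s * u))) *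
        ∏ j, (1 - z j * u)⁻¹ := by rw [key, one_mul]
    _ = ∑ l, (z l ^ (n-1) * ∏ s ∈ Finset.univ.erase l, (z l - z s)⁻¹) * (1 - z l * u)⁻¹ := by
        rw [Finset.sum_mul]
        refine Finset.sum_congr rfl fun l _ => ?_
        have hPl : (∏ j, (1 - z j * u)⁻¹) =
            (1 - z l * u)⁻¹ * ∏ s ∈ Finset.univ.erase l, (1 - z s * u)⁻¹ :=
          (Finset.mul_prod_erase Finset.univ (fun j => (1 - z j * u)⁻¹) (Finset.mem_univ l)).symm
        have hprod : (∏ s ∈ Finset.univ.erase l, (1 - z s * u)) ≠ 0 :=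
          Finset.prod_ne_zero_iff.mpr fun j _ => h1 j
        rw [Finset.prod_mul_distrib, hPl]
        simp only [Finset.prod_inv_distrib]
        have hr : z l ^ (n-1) * ((∏ s ∈ Finset.univ.erase l, (z l - z s))⁻¹ *
              ∏ s ∈ Finset.univ.erase l, (1 - z s * u)) *
            ((1 - z l * u)⁻¹ * (∏ s ∈ Finset.univ.erase l, (1 - z s * u))⁻¹)
            = z l ^ (n-1) * (∏ s ∈ Finset.univ.erase l, (z l - z s))⁻¹ * (1 - z l * u)⁻¹ *
              ((∏ s ∈ Finset.univ.erase l, (1 - z s * u)) *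
                (∏ s ∈ Finset.univ.erase l, (1 - z s * u))⁻¹) := by ring
        rw [hr, mul_inv_cancel₀ hprod, mul_one]

end main

/-- Reduction of the Lauricella function `F_D^{(n)}(a;1,…,1;c;z₁,…,z_n)` (via its
Euler integral) to the divided difference of `g(z) = z^{n−1} ₂F₁(a,1;c;z)`. -/
theorem stmt15 (n : ℕ) (hn : 0 < n) (a c : ℂ) (ha : 0 < a.re) (hac : a.re < c.re)
    (hc : ∀ m : ℕ, c ≠ -(m : ℂ)) (z : Fin n → ℂ)
    (hz : ∀ j, ‖z j‖ < 1) (hinj : Function.Injective z) :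
    Complex.Gamma c / (Complex.Gamma a * Complex.Gamma (c - a)) *
        (∫ t in Set.Ioo (0 : ℝ) 1,
          (t : ℂ) ^ (a - 1) * ((1 - t : ℝ) : ℂ) ^ (c - a - 1) *
            ∏ j, (1 - z j * t)⁻¹) =
      ∑ l, (z l ^ (n - 1) * hyp2F1 a 1 c (z l)) *
        ∏ s ∈ Finset.univ.erase l, (z l - z s)⁻¹ := by
  have hca : 0 < (c - a).re := by simp [Complex.sub_re]; linarith
  set g : ℝ → ℂ := fun t => (t : ℂ) ^ (a - 1) * ((1 - t : ℝ) : ℂ) ^ (c - a - 1) with hg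
  have hgint : IntegrableOn g (Set.Ioo (0:ℝ) 1) volume := kernel_integrable ha hca
  set C : Fin n → ℂ := fun l => z l ^ (n - 1) * ∏ s ∈ Finset.univ.erase l, (z l - z s)⁻¹ with hC
  -- 1 - z j * t ≠ 0 for t ∈ Ioo 0 1
  have hne : ∀ (j : Fin n) (t : ℝ), t ∈ Set.Ioo (0:ℝ) 1 → 1 - z j * t ≠ 0 := by
    intro j t ht h
    have h1 : ‖z j * (t:ℂ)‖ < 1 := by
      rw [norm_mul, Complex.norm_real, Real.norm_of_nonneg ht.1.le]
      nlinarith [norm_nonneg (z j), hz j, ht.2]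
    have : z j * (t:ℂ) = 1 := by linear_combination -h
    rw [this] at h1; simp at h1
  -- rewrite integrand via partial fractions
  have hint_eq : ∫ t in Set.Ioo (0:ℝ) 1, g t * ∏ j, (1 - z j * t)⁻¹
      = ∫ t in Set.Ioo (0:ℝ) 1, ∑ l, C l * (g t * (1 - z l * t)⁻¹) := by
    refine setIntegral_congr_fun measurableSet_Ioo fun t ht => ?_
    have ht0 : (t:ℂ) ≠ 0 := by exact_mod_cast ne_of_gt ht.1
    rw [partial_frac n hn z hinj t ht0 (fun j => hne j t ht), Finset.mul_sum]
    exact Finset.sum_congr rfl fun l _ => by rw [hC]; ring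
  -- integrability of each summand
  have hterm_int : ∀ l : Fin n, IntegrableOn (fun t : ℝ => g t * (1 - z l * t)⁻¹)
      (Set.Ioo (0:ℝ) 1) volume := by
    intro l
    have hmeas : AEStronglyMeasurable (fun t : ℝ => g t * (1 - z l * t)⁻¹)
        (volume.restrict (Set.Ioo (0:ℝ) 1)) := by
      refine hgint.aestronglyMeasurable.mul ?_
      exact ((continuous_const.sub (continuous_const.mul Complex.continuous_ofReal)).measurable.inv).aestronglyMeasurable
    have hzl : ‖z l‖ < 1 := hz l
    refine (hgint.norm.const_mul ((1 - ‖z l‖)⁻¹)).mono' hmeas ?_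
    rw [ae_restrict_iff' measurableSet_Ioo]
    filter_upwards with t ht
    have hlow : 1 - ‖z l‖ ≤ ‖1 - z l * (t:ℂ)‖ := by
      have h1 : ‖z l * (t:ℂ)‖ ≤ ‖z l‖ := by
        rw [norm_mul, Complex.norm_real, Real.norm_of_nonneg ht.1.le]
        nlinarith [norm_nonneg (z l), ht.2.le]
      calc 1 - ‖z l‖ ≤ 1 - ‖z l * (t:ℂ)‖ := by linarith
        _ ≤ ‖1 - z l * (t:ℂ)‖ := by
            have := norm_sub_norm_le (1 : ℂ) (z l * (t:ℂ)); simpa using this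
    have hpos : (0:ℝ) < 1 - ‖z l‖ := by linarith
    calc ‖g t * (1 - z l * (t:ℂ))⁻¹‖ = ‖g t‖ * ‖(1 - z l * (t:ℂ))‖⁻¹ := by
          rw [norm_mul, norm_inv]
      _ ≤ ‖g t‖ * (1 - ‖z l‖)⁻¹ := by gcongr
      _ = (1 - ‖z l‖)⁻¹ * ‖g t‖ := mul_comm _ _
  rw [hint_eq, integral_finset_sum _ (fun l _ => ((hterm_int l).const_mul (C l)))]
  rw [Finset.mul_sum]
  refine Finset.sum_congr rfl fun l _ => ?_
  rw [integral_const_mul, show Complex.Gamma c / (Complex.Gamma a * Complex.Gamma (c - a)) *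
      (C l * ∫ t in Set.Ioo (0:ℝ) 1, g t * (1 - z l * t)⁻¹)
    = C l * (Complex.Gamma c / (Complex.Gamma a * Complex.Gamma (c - a)) *
      ∫ t in Set.Ioo (0:ℝ) 1, g t * (1 - z l * t)⁻¹) from by ring]
  rw [euler_2F1 ha hac (hz l)]
  rw [hC]; ring
end
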